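/- Let m be a positive integer with distinct prime divisors p_1, …, p_k. Then lim_{N→∞} (1/N) ∑_{m|n, n≤N} φ(n)/n = (6/(π² m)) · ∏_{j=1}^k p_j/(1 + p_j). -/

import Mathlib

/-!
Since `φ n / n = ∑_{d ∣ n} μ d / d`, exchanging the sums turns the average into
`∑_d (μ d / d) ⌊N / lcm(m, d)⌋ / N`, which by dominated convergence tends to
`∑_d μ d / (d lcm(m, d)) = (1 / m) ∑_d μ d gcd(m, d) / d²`. The summand is multiplicative in `d`,
so for a prime `p` the full series is the part over `d` coprime to `p` times `1 - 1/p²` if `p ∤ m`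
and times `1 - 1/p` if `p ∣ m`. Adjoining the prime factors of `m` one at a time thus multiplies
`∑ μ d / d² = 1 / ζ(2) = 6 / π²` by `(1 - 1/p) / (1 - 1/p²) = p / (1 + p)` for each of them.
-/

open Filter Topology Real ArithmeticFunction
open scoped ArithmeticFunction.Moebius

theorem totient_div_eq_sum_moebius_div (n : ℕ) :
    (n.totient : ℝ) / n = ∑ d ∈ n.divisors, (μ d : ℝ) / d := by
  rcases n.eq_zero_or_pos with rfl | hn
  · simp
  have hinv := (sum_eq_iff_sum_mul_moebius_eq (f := fun k => (k.totient : ℝ))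
    (g := fun k => (k : ℝ))).mp (fun k _ => mod_cast Nat.sum_totient k) n hn
  rw [← hinv, Nat.sum_divisorsAntidiagonal (f := fun d e => (μ d : ℝ) * e), Finset.sum_div]
  refine Finset.sum_congr rfl fun d hd => ?_
  have hd0 : (d : ℝ) ≠ 0 := Nat.cast_ne_zero.mpr (Nat.pos_of_mem_divisors hd).ne'
  rw [Nat.cast_div (Nat.dvd_of_mem_divisors hd) hd0]
  field_simp

theorem sum_filter_dvd_sum_divisors {M : Type*} [AddCommMonoid M] (f : ℕ → M) (m N : ℕ) :
    ∑ n ∈ (Finset.Icc 1 N).filter (m ∣ ·), ∑ d ∈ n.divisors, f d =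
      ∑ d ∈ Finset.Icc 1 N, (N / m.lcm d) • f d := by
  rw [Finset.sum_comm' (t' := Finset.Icc 1 N)
    (s' := fun d => (Finset.Icc 1 N).filter (m.lcm d ∣ ·))]
  · refine Finset.sum_congr rfl fun d _ => ?_
    rw [Finset.sum_const, show Finset.Icc 1 N = Finset.Ioc 0 N from rfl,
      Nat.Ioc_filter_dvd_card_eq_div]
  · intro n d
    simp only [Finset.mem_filter, Finset.mem_Icc, Nat.mem_divisors, Nat.lcm_dvd_iff]
    constructor
    · rintro ⟨⟨⟨h1n, hnN⟩, hmn⟩, hdn, -⟩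
      have := Nat.le_of_dvd (by omega) hdn
      have := Nat.pos_of_dvd_of_pos hdn (by omega)
      exact ⟨⟨⟨h1n, hnN⟩, hmn, hdn⟩, by omega, by omega⟩
    · rintro ⟨⟨⟨h1n, hnN⟩, hmn, hdn⟩, -⟩
      exact ⟨⟨⟨h1n, hnN⟩, hmn⟩, hdn, by omega⟩

theorem tendsto_natCast_div_div_atTop (L : ℕ) :
    Tendsto (fun N : ℕ => ((N / L : ℕ) : ℝ) / N) atTop (𝓝 (1 / L)) := by
  rcases L.eq_zero_or_pos with rfl | hL
  · simp
  have hLR : (0 : ℝ) < L := by exact_mod_cast hL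
  have hfloor : Tendsto (fun N : ℕ => (⌊(N : ℝ) / L⌋₊ : ℝ) / ((N : ℝ) / L)) atTop (𝓝 1) :=
    tendsto_nat_floor_div_atTop.comp (tendsto_natCast_atTop_atTop.atTop_div_const hLR)
  have hlim := hfloor.div_const (L : ℝ)
  rw [one_div] at hlim ⊢
  refine hlim.congr' ?_
  filter_upwards [eventually_gt_atTop 0] with N hN
  rw [Nat.floor_div_natCast, Nat.floor_natCast]
  field_simp

theorem tendsto_tsum_mul_natCast_div_div (c : ℕ → ℝ) (L : ℕ → ℕ)
    (hc : Summable fun d => |c d| / L d) :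
    Tendsto (fun N : ℕ => ∑' d, c d * ((N / L d : ℕ) : ℝ) / N) atTop
      (𝓝 (∑' d, c d / L d)) := by
  refine tendsto_tsum_of_dominated_convergence hc (fun d => ?_)
    (Eventually.of_forall fun N d => ?_)
  · simpa [mul_div_assoc, div_eq_mul_one_div (c d)] using
      (tendsto_natCast_div_div_atTop (L d)).const_mul (c d)
  · have hle : ((N / L d : ℕ) : ℝ) / N ≤ 1 / L d := by
      rcases N.eq_zero_or_pos with rfl | hN
      · simp
      calc ((N / L d : ℕ) : ℝ) / N ≤ (N : ℝ) / L d / N := by gcongr; exact Nat.cast_div_le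
        _ = 1 / L d := by field_simp
    have hnonneg : 0 ≤ ((N / L d : ℕ) : ℝ) / N := by positivity
    rw [Real.norm_eq_abs, mul_div_assoc, abs_mul, abs_of_nonneg hnonneg,
      div_eq_mul_one_div |c d|]
    exact mul_le_mul_of_nonneg_left hle (abs_nonneg _)

theorem tsum_moebius_div_sq : ∑' d : ℕ, (μ d : ℝ) / d ^ 2 = 6 / π ^ 2 := by
  have hpi : (π : ℂ) ^ 2 ≠ 0 := pow_ne_zero 2 (Complex.ofReal_ne_zero.mpr pi_ne_zero)
  have hL : LSeries (fun n => (μ n : ℂ)) 2 = 6 / (π : ℂ) ^ 2 := by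
    have hmul := LSeries_zeta_mul_Lseries_moebius (s := 2) (by norm_num)
    rw [LSeries_zeta_eq_riemannZeta (by norm_num), riemannZeta_two] at hmul
    rw [eq_div_iff hpi]
    linear_combination 6 * hmul
  have hcast : ((∑' d : ℕ, (μ d : ℝ) / d ^ 2 : ℝ) : ℂ) = LSeries (fun n => (μ n : ℂ)) 2 := by
    rw [Complex.ofReal_tsum, LSeries]
    refine tsum_congr fun n => ?_
    rcases eq_or_ne n 0 with rfl | hn
    · simp
    · rw [LSeries.term_of_ne_zero hn, Complex.cpow_two]
      push_cast
      rfl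
  apply Complex.ofReal_injective
  rw [hcast, hL]
  push_cast
  rfl

theorem tsum_eq_one_add_mul_tsum_not_dvd {f : ℕ → ℝ} (hf : Summable f) {p : ℕ} (hp : p ≠ 0)
    {c : ℝ} (hfp : ∀ e, f (p * e) = if p ∣ e then 0 else c * f e) :
    ∑' d, f d = (1 + c) * ∑' d, if p ∣ d then 0 else f d := by
  have hmultiples : ∑' d, (if p ∣ d then f d else 0) = c * ∑' d, if p ∣ d then 0 else f d := by
    rw [← (mul_right_injective₀ hp).tsum_eq, ← tsum_mul_left]
    · refine tsum_congr fun e => ?_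
      rw [if_pos (dvd_mul_right p e), hfp, mul_ite, mul_zero]
    · intro d hd
      by_cases hpd : p ∣ d
      · exact ⟨d / p, Nat.mul_div_cancel' hpd⟩
      · exact absurd (if_neg hpd) hd
  rw [one_add_mul, ← hmultiples, ← Summable.tsum_add]
  · exact tsum_congr fun d => by split_ifs <;> simp
  all_goals exact hf.abs.of_norm_bounded fun d => by split_ifs <;> simp

/-- For squarefree `d` and `s = m.primeFactors` this is `μ d * gcd m d / d ^ 2`. -/
noncomputable def moebiusWeight (s : Finset ℕ) (d : ℕ) : ℝ :=
  μ d * (∏ p ∈ s ∩ d.primeFactors, p : ℕ) / d ^ 2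

section moebiusWeight

variable (s : Finset ℕ)

theorem moebiusWeight_empty (d : ℕ) : moebiusWeight ∅ d = μ d / d ^ 2 := by
  simp [moebiusWeight]

theorem moebiusWeight_mul_of_coprime {a b : ℕ} (hab : a.Coprime b) :
    moebiusWeight s (a * b) = moebiusWeight s a * moebiusWeight s b := by
  rw [moebiusWeight, moebiusWeight, moebiusWeight,
    isMultiplicative_moebius.map_mul_of_coprime hab, hab.primeFactors_mul,
    Finset.inter_union_distrib_left, Finset.prod_union
      (hab.disjoint_primeFactors.mono Finset.inter_subset_right Finset.inter_subset_right)]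
  push_cast
  ring

theorem moebiusWeight_prime_mul {p : ℕ} (hp : p.Prime) (e : ℕ) :
    moebiusWeight s (p * e) = if p ∣ e then 0 else moebiusWeight s p * moebiusWeight s e := by
  split_ifs with hpe
  · have : ¬ Squarefree (p * e) := fun hsq =>
      hp.coprime_iff_not_dvd.mp (Nat.squarefree_mul_iff.mp hsq).1 hpe
    simp [moebiusWeight, moebius_eq_zero_of_not_squarefree this]
  · exact moebiusWeight_mul_of_coprime s (hp.coprime_iff_not_dvd.mpr hpe)

theorem moebiusWeight_prime_of_notMem {p : ℕ} (hp : p.Prime) (hps : p ∉ s) :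
    moebiusWeight s p = -1 / p ^ 2 := by
  simp [moebiusWeight, hp, moebius_apply_prime hp, hps]

theorem moebiusWeight_insert_self_of_prime {p : ℕ} (hp : p.Prime) :
    moebiusWeight (insert p s) p = -1 / p := by
  have : (p : ℝ) ≠ 0 := by exact_mod_cast hp.ne_zero
  simp [moebiusWeight, hp, moebius_apply_prime hp]
  field_simp

theorem moebiusWeight_insert_of_not_dvd {p d : ℕ} (hpd : ¬ p ∣ d) :
    moebiusWeight (insert p s) d = moebiusWeight s d := by
  rw [moebiusWeight, moebiusWeight, Finset.insert_inter_of_notMem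
    (fun h => hpd (Nat.dvd_of_mem_primeFactors h))]

theorem summable_moebiusWeight (hs : ∀ p ∈ s, p.Prime) : Summable (moebiusWeight s) := by
  have hsum := (Real.summable_one_div_nat_pow.mpr one_lt_two).mul_left ((∏ p ∈ s, p : ℕ) : ℝ)
  refine hsum.of_norm_bounded fun d => ?_
  have hprod : (∏ p ∈ s ∩ d.primeFactors, p : ℕ) ≤ ∏ p ∈ s, p :=
    Nat.le_of_dvd (Finset.prod_pos fun p hp => (hs p hp).pos)
      (Finset.prod_dvd_prod_of_subset _ _ _ Finset.inter_subset_left)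
  have hmu : |(μ d : ℝ)| ≤ 1 := mod_cast abs_moebius_le_one
  rcases eq_or_ne d 0 with rfl | hd
  · simp [moebiusWeight]
  rw [moebiusWeight, norm_div, norm_mul, norm_pow, Real.norm_eq_abs, Real.norm_natCast,
    Real.norm_natCast, mul_one_div]
  gcongr
  exact (mul_le_of_le_one_left (Nat.cast_nonneg _) hmu).trans (mod_cast hprod)

theorem tsum_moebiusWeight (hs : ∀ p ∈ s, p.Prime) :
    ∑' d, moebiusWeight s d = 6 / π ^ 2 * ∏ p ∈ s, (p : ℝ) / (1 + p) := by
  induction s using Finset.induction_on with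
  | empty => simp_rw [moebiusWeight_empty, Finset.prod_empty, mul_one, tsum_moebius_div_sq]
  | @insert p t hpt ih =>
    have hp : p.Prime := hs p (Finset.mem_insert_self p t)
    have ht : ∀ q ∈ t, q.Prime := fun q hq => hs q (Finset.mem_insert_of_mem hq)
    have hpR : (p : ℝ) ≠ 0 := by exact_mod_cast hp.ne_zero
    set A := ∑' d, if p ∣ d then 0 else moebiusWeight t d
    have htsum : ∑' d, moebiusWeight t d = (1 - 1 / p ^ 2) * A := by
      rw [tsum_eq_one_add_mul_tsum_not_dvd (summable_moebiusWeight t ht) hp.ne_zero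
        (moebiusWeight_prime_mul t hp), moebiusWeight_prime_of_notMem t hp hpt]
      ring
    have hinsert : ∑' d, moebiusWeight (insert p t) d = (1 - 1 / p) * A := by
      rw [tsum_eq_one_add_mul_tsum_not_dvd (summable_moebiusWeight _ hs) hp.ne_zero
        (moebiusWeight_prime_mul _ hp), moebiusWeight_insert_self_of_prime t hp]
      congr 1
      · ring
      · refine tsum_congr fun d => ?_
        split_ifs with hpd
        · rfl
        · exact moebiusWeight_insert_of_not_dvd t hpd
    rw [hinsert, Finset.prod_insert hpt, ← mul_left_comm, ← ih ht, htsum]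
    field_simp
    ring

end moebiusWeight

theorem moebius_div_mul_lcm_eq {m : ℕ} (hm : m ≠ 0) (d : ℕ) :
    (μ d : ℝ) / (d * m.lcm d) = moebiusWeight m.primeFactors d / m := by
  by_cases hsq : Squarefree d
  · have hd : d ≠ 0 := hsq.ne_zero
    have hgcd : m.gcd d = ∏ p ∈ m.primeFactors ∩ d.primeFactors, p := by
      rw [← Nat.primeFactors_gcd hm hd,
        Nat.prod_primeFactors_of_squarefree (hsq.squarefree_of_dvd (Nat.gcd_dvd_right m d))]
    have hlcm : (m.gcd d : ℝ) * m.lcm d = m * d := mod_cast Nat.gcd_mul_lcm m d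
    have : (m.lcm d : ℝ) ≠ 0 := by exact_mod_cast Nat.lcm_ne_zero hm hd
    rw [moebiusWeight, ← hgcd]
    field_simp
    linear_combination -hlcm
  · simp [moebiusWeight, moebius_eq_zero_of_not_squarefree hsq]

theorem tsum_moebius_div_mul_lcm {m : ℕ} (hm : m ≠ 0) :
    ∑' d : ℕ, (μ d : ℝ) / (d * m.lcm d) =
      6 / (π ^ 2 * m) * ∏ p ∈ m.primeFactors, (p : ℝ) / (1 + p) := by
  simp_rw [moebius_div_mul_lcm_eq hm, tsum_div_const,
    tsum_moebiusWeight _ fun p hp => Nat.prime_of_mem_primeFactors hp]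
  ring

theorem summable_abs_moebius_div_div_lcm {m : ℕ} (hm : m ≠ 0) :
    Summable fun d : ℕ => |(μ d : ℝ) / d| / (m.lcm d : ℕ) := by
  have hsum := ((summable_moebiusWeight m.primeFactors fun p hp =>
    Nat.prime_of_mem_primeFactors hp).div_const (m : ℝ)).abs
  refine hsum.congr fun d => ?_
  rw [← moebius_div_mul_lcm_eq hm, ← div_div, abs_div _ (m.lcm d : ℝ), Nat.abs_cast]

theorem sum_filter_dvd_totient_div_eq_tsum {m : ℕ} (hm : m ≠ 0) (N : ℕ) :
    ∑ n ∈ (Finset.Icc 1 N).filter (m ∣ ·), (n.totient : ℝ) / n =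
      ∑' d, (μ d : ℝ) / d * (N / m.lcm d : ℕ) := by
  simp_rw [totient_div_eq_sum_moebius_div, sum_filter_dvd_sum_divisors, nsmul_eq_mul, mul_comm]
  refine (tsum_eq_sum fun d hd => ?_).symm
  rcases eq_or_ne d 0 with rfl | hd0
  · simp
  have hdN : N < d := by
    simp only [Finset.mem_Icc, not_and_or] at hd
    omega
  have hNd : N < m.lcm d := hdN.trans_le <|
    Nat.le_of_dvd (Nat.pos_of_ne_zero (Nat.lcm_ne_zero hm hd0)) (Nat.dvd_lcm_right m d)
  simp [Nat.div_eq_of_lt hNd]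

theorem stmt13 (m : ℕ) (hm : 0 < m) :
    Tendsto (fun N : ℕ =>
      (∑ n ∈ (Finset.Icc 1 N).filter (fun n => m ∣ n), (Nat.totient n : ℝ) / n) / N)
      atTop (𝓝 (6 / (π ^ 2 * m) * ∏ p ∈ m.primeFactors, (p : ℝ) / (1 + p))) := by
  have hlim := tendsto_tsum_mul_natCast_div_div (fun d => (μ d : ℝ) / d) (m.lcm ·)
    (summable_abs_moebius_div_div_lcm hm.ne')
  simp_rw [div_div] at hlim
  rw [← tsum_moebius_div_mul_lcm hm.ne']
  refine hlim.congr fun N => ?_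
  rw [sum_filter_dvd_totient_div_eq_tsum hm.ne', tsum_div_const]
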